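/- Let Σ be a connected (G,2)-arc transitive graph of diameter 2 and girth 4, with G ≤ Aut(Σ), and suppose the subdivision graph S(Σ) is locally (G,4)-distance transitive. Then Σ is a complete bipartite graph K_{n,n} for some n ≥ 2. -/

import Mathlib

open SimpleGraph

/-- The subdivision graph of a simple graph `S`: vertex set `V ⊕ E(S)`,
with `x ∈ V` adjacent to `e ∈ E(S)` iff `x ∈ e`. -/
def subdiv {V : Type*} (S : SimpleGraph V) : SimpleGraph (V ⊕ S.edgeSet) where
  Adj a b :=
    (∃ (x : V) (e : S.edgeSet), a = Sum.inl x ∧ b = Sum.inr e ∧ x ∈ (e : Sym2 V)) ∨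
    (∃ (x : V) (e : S.edgeSet), b = Sum.inl x ∧ a = Sum.inr e ∧ x ∈ (e : Sym2 V))
  symm := ⟨fun a b h => h.elim (fun ⟨x, e, h1, h2, h3⟩ => Or.inr ⟨x, e, h1, h2, h3⟩)
    (fun ⟨x, e, h1, h2, h3⟩ => Or.inl ⟨x, e, h1, h2, h3⟩)⟩
  loopless := by
    constructor
    rintro a (⟨x, e, h1, h2, _⟩ | ⟨x, e, h1, h2, _⟩) <;> rw [h1] at h2 <;>
      cases h2

/-- `G` acts on `V` by automorphisms of the graph `S`. -/
def IsGraphAction {V : Type*} (S : SimpleGraph V) (G : Type*) [Group G] [MulAction G V] : Prop :=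
  ∀ (g : G) (u v : V), S.Adj (g • u) (g • v) ↔ S.Adj u v

/-- The induced action of `g` on the edge set of `S`. -/
def emap {V : Type*} {S : SimpleGraph V} {G : Type*} [Group G] [MulAction G V]
    (hA : IsGraphAction S G) (g : G) (e : S.edgeSet) : S.edgeSet :=
  ⟨Sym2.map (g • ·) e.1, by
    obtain ⟨e, he⟩ := e
    induction e with
    | _ u v =>
      rw [Sym2.map_pair_eq]
      exact (S.mem_edgeSet).mpr ((hA g u v).mpr ((S.mem_edgeSet).mp he))⟩

/-- The induced action of `g` on the vertices of the subdivision graph of `S`. -/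
def smap {V : Type*} {S : SimpleGraph V} {G : Type*} [Group G] [MulAction G V]
    (hA : IsGraphAction S G) (g : G) : V ⊕ S.edgeSet → V ⊕ S.edgeSet :=
  Sum.map (g • ·) (emap hA g)

/-- `p` encodes an `n`-arc of `S` (only values `p 0, …, p n` are relevant). -/
def IsNArc {V : Type*} (S : SimpleGraph V) (n : ℕ) (p : ℕ → V) : Prop :=
  (∀ i < n, S.Adj (p i) (p (i + 1))) ∧ ∀ j, 1 ≤ j → j + 1 ≤ n → p (j - 1) ≠ p (j + 1)

section Aux

variable {V : Type*} {S : SimpleGraph V}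

lemma subdiv_adj_inl_inr {x : V} {e : S.edgeSet} :
    (subdiv S).Adj (Sum.inl x) (Sum.inr e) ↔ x ∈ (e : Sym2 V) := by
  constructor
  · rintro (⟨y, f, h1, h2, h3⟩ | ⟨y, f, h1, h2, h3⟩)
    · cases h1; cases h2; exact h3
    · exact absurd h1 (by simp)
  · intro h; exact Or.inl ⟨x, e, rfl, rfl, h⟩

lemma subdiv_adj_inr_inl {x : V} {e : S.edgeSet} :
    (subdiv S).Adj (Sum.inr e) (Sum.inl x) ↔ x ∈ (e : Sym2 V) := by
  rw [adj_comm]; exact subdiv_adj_inl_inr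

lemma subdiv_adj_isLeft {a b : V ⊕ S.edgeSet} (h : (subdiv S).Adj a b) :
    a.isLeft = !b.isLeft := by
  rcases h with ⟨y, f, h1, h2, h3⟩ | ⟨y, f, h1, h2, h3⟩ <;> subst h1 <;> subst h2 <;> rfl

lemma subdiv_walk_parity {a b : V ⊕ S.edgeSet} (p : (subdiv S).Walk a b) :
    Even p.length ↔ a.isLeft = b.isLeft := by
  induction p with
  | nil => simp
  | @cons a c b h p ih =>
    have h2 := subdiv_adj_isLeft h
    rw [SimpleGraph.Walk.length_cons, Nat.even_add_one, ih, h2]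
    cases c.isLeft <;> cases b.isLeft <;> simp

lemma subdiv_dist_four (e f : S.edgeSet)
    (hdisj : ∀ z, z ∈ (e : Sym2 V) → z ∉ (f : Sym2 V))
    {x y : V} (hx : x ∈ (e : Sym2 V)) (hy : y ∈ (f : Sym2 V)) (hxy : S.Adj x y) :
    (subdiv S).dist (Sum.inr e) (Sum.inr f) = 4 := by
  set g : S.edgeSet := ⟨s(x, y), hxy⟩ with hg
  have a1 : (subdiv S).Adj (Sum.inr e) (Sum.inl x) := subdiv_adj_inr_inl.mpr hx
  have a2 : (subdiv S).Adj (Sum.inl x) (Sum.inr g) := subdiv_adj_inl_inr.mpr (by simp [hg])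
  have a3 : (subdiv S).Adj (Sum.inr g) (Sum.inl y) := subdiv_adj_inr_inl.mpr (by simp [hg])
  have a4 : (subdiv S).Adj (Sum.inl y) (Sum.inr f) := subdiv_adj_inl_inr.mpr hy
  let w : (subdiv S).Walk (Sum.inr e) (Sum.inr f) :=
    .cons a1 (.cons a2 (.cons a3 (.cons a4 .nil)))
  have hle : (subdiv S).dist (Sum.inr e) (Sum.inr f) ≤ 4 := SimpleGraph.dist_le w
  have hreach : (subdiv S).Reachable (Sum.inr e) (Sum.inr f) := ⟨w⟩
  obtain ⟨p, hp⟩ := hreach.exists_walk_length_eq_dist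
  have heven : Even ((subdiv S).dist (Sum.inr e) (Sum.inr f)) := by
    rw [← hp, subdiv_walk_parity p]; rfl
  have hne0 : (subdiv S).dist (Sum.inr e) (Sum.inr f) ≠ 0 := by
    intro h0
    have := (hreach.dist_eq_zero_iff).mp h0
    have hef : e = f := by injection this
    exact hdisj x hx (hef ▸ hx)
  have hne2 : (subdiv S).dist (Sum.inr e) (Sum.inr f) ≠ 2 := by
    intro h2
    rw [h2] at hp
    cases p with
    | nil => simp at hp
    | cons h1 q =>
      cases q with
      | nil => simp at hp
      | @cons c c' _ h2' q' =>
        cases q' with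
        | nil =>
          rcases h1 with ⟨z, ff, hz1, hz2, hz3⟩ | ⟨z, ff, hz1, hz2, hz3⟩
          · exact absurd hz1 (by simp)
          · have hfe : ff = e := by injection hz2 with h; exact h.symm
            subst hz1
            have hz' : z ∈ (f : Sym2 V) := subdiv_adj_inl_inr.mp h2'
            exact hdisj z (hfe ▸ hz3) hz'
        | cons _ _ => simp at hp
  obtain ⟨k, hk⟩ := heven
  omega

lemma triangle_free (hgirth : S.egirth = 4) {a b c : V}
    (hab : S.Adj a b) (hbc : S.Adj b c) (hca : S.Adj c a) : False := by
  have hne1 := hab.ne; have hne2 := hbc.ne; have hne3 := hca.ne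
  let w : S.Walk a a := .cons hab (.cons hbc (.cons hca .nil))
  have hcyc : w.IsCycle := by
    rw [SimpleGraph.Walk.isCycle_def]
    refine ⟨⟨?_⟩, by simp [w], ?_⟩
    · simp [w, Sym2.eq_iff]
      tauto
    · simp [w]
      tauto
  have h3 : S.egirth ≤ 3 := by
    have := le_egirth.mp (le_refl S.egirth) a w hcyc
    simpa [w] using this
  rw [hgirth] at h3
  norm_num at h3

lemma exists_four_cycle (hgirth : S.egirth = 4) :
    ∃ a b c d : V, S.Adj a b ∧ S.Adj b c ∧ S.Adj c d ∧ S.Adj d a ∧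
      a ≠ b ∧ a ≠ c ∧ a ≠ d ∧ b ≠ c ∧ b ≠ d ∧ c ≠ d := by
  have hnac : ¬ S.IsAcyclic := by
    intro h
    rw [← egirth_eq_top] at h
    rw [hgirth] at h
    norm_num at h
  obtain ⟨a, w, hw, hlen⟩ := exists_egirth_eq_length.mpr hnac
  rw [hgirth] at hlen
  have hlen4 : w.length = 4 := by exact_mod_cast hlen.symm
  cases w with
  | nil => simp at hlen4
  | @cons _ b _ h1 q =>
    cases q with
    | nil => simp at hlen4
    | @cons _ c _ h2 q =>
      cases q with
      | nil => simp at hlen4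
      | @cons _ d _ h3 q =>
        cases q with
        | nil => simp at hlen4
        | @cons _ e' _ h4 q =>
          cases q with
          | nil =>
            have hnd := hw.support_nodup
            simp [SimpleGraph.Walk.support_cons] at hnd
            exact ⟨a, b, c, d, h1, h2, h3, h4, h1.ne, by tauto, by tauto, by tauto,
              by tauto, by tauto⟩
          | cons _ _ => simp at hlen4

end Aux


/-- A connected `(G,2)`-arc transitive graph of diameter 2 and girth 4 whose subdivision
graph is locally `(G,4)`-distance transitive is a complete bipartite graph `K_{n,n}` for
some `n ≥ 2`. -/
theorem stmt_18 {V : Type*} [Fintype V] {G : Type*} [Group G] [MulAction G V]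
    (S : SimpleGraph V) (hconn : S.Connected) (hA : IsGraphAction S G)
    (hdiam : S.diam = 2) (hgirth : S.egirth = 4)
    (h2arc : ∃ p : ℕ → V, IsNArc S 2 p)
    (htrans : ∀ i, 1 ≤ i → i ≤ 2 → ∀ p q : ℕ → V,
      IsNArc S i p → IsNArc S i q → ∃ g : G, ∀ k ≤ i, g • p k = q k)
    (hloc : (∀ (α a b : V ⊕ S.edgeSet) (i : ℕ), 1 ≤ i → i ≤ 4 →
        (subdiv S).dist α a = i → (subdiv S).dist α b = i →
        ∃ g : G, smap hA g α = α ∧ smap hA g a = b) ∧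
      ∃ α a : V ⊕ S.edgeSet, (subdiv S).dist α a = 4) :
    ∃ n : ℕ, 2 ≤ n ∧ Nonempty (S ≃g completeBipartiteGraph (Fin n) (Fin n)) := by
  classical
  -- triangle-freeness
  have tf : ∀ a b c : V, S.Adj a b → S.Adj b c → S.Adj c a → False :=
    fun a b c h1 h2 h3 => triangle_free hgirth h1 h2 h3
  -- arc-transitivity
  have harc : ∀ a b u' v' : V, S.Adj a b → S.Adj u' v' →
      ∃ g : G, g • a = u' ∧ g • b = v' := by
    intro a b u' v' hab huv
    have hp : IsNArc S 1 (fun k => if k = 0 then a else b) := by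
      constructor
      · intro i hi
        interval_cases i
        simpa using hab
      · intro j hj hj1; omega
    have hq : IsNArc S 1 (fun k => if k = 0 then u' else v') := by
      constructor
      · intro i hi
        interval_cases i
        simpa using huv
      · intro j hj hj1; omega
    obtain ⟨g, hg⟩ := htrans 1 le_rfl (by norm_num) _ _ hp hq
    refine ⟨g, ?_, ?_⟩
    · simpa using hg 0 (by norm_num)
    · simpa using hg 1 le_rfl
  -- a 4-cycle through every arc
  have hfc : ∀ u' v' : V, S.Adj u' v' → ∃ w x : V, S.Adj v' w ∧ S.Adj w x ∧ S.Adj x u' ∧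
      w ≠ u' ∧ x ≠ u' ∧ x ≠ v' ∧ w ≠ v' := by
    obtain ⟨a, b, c, d, hab, hbc, hcd, hda, hab', hac, had, hbc', hbd, hcd'⟩ :=
      exists_four_cycle hgirth
    intro u' v' huv
    obtain ⟨g, hga, hgb⟩ := harc a b u' v' hab huv
    have inj : Function.Injective (fun z : V => g • z) := MulAction.injective g
    refine ⟨g • c, g • d, ?_, ?_, ?_, ?_, ?_, ?_, ?_⟩
    · rw [← hgb]; exact (hA g b c).mpr hbc
    · exact (hA g c d).mpr hcd
    · rw [← hga]; exact (hA g d a).mpr hda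
    · rw [← hga]; exact fun h => hac (inj h).symm
    · rw [← hga]; exact fun h => had (inj h).symm
    · rw [← hgb]; exact fun h => hbd (inj h).symm
    · rw [← hgb]; exact fun h => hbc' (inj h).symm
  -- the key closure property: every 3-arc closes into a 4-cycle
  have hC : ∀ u' v' w x : V, S.Adj u' v' → S.Adj v' w → w ≠ u' → S.Adj w x →
      x ≠ u' → x ≠ v' → S.Adj x u' := by
    intro u' v' w x huv hvw hwu hwx hxu hxv
    obtain ⟨w0, x0, hvw0, hw0x0, hx0u, hw0u, hx0u', hx0v, hw0v⟩ := hfc u' v' huv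
    set e : S.edgeSet := ⟨s(u', v'), huv⟩ with he
    set f0 : S.edgeSet := ⟨s(w0, x0), hw0x0⟩ with hf0
    set f : S.edgeSet := ⟨s(w, x), hwx⟩ with hf
    have hd1 : (subdiv S).dist (Sum.inr e) (Sum.inr f0) = 4 := by
      apply subdiv_dist_four
      · intro z hz hz'
        simp [he, Sym2.mem_iff] at hz
        simp [hf0, Sym2.mem_iff] at hz'
        rcases hz with rfl | rfl <;> rcases hz' with rfl | rfl
        · exact hw0u rfl
        · exact hx0u' rfl
        · exact hw0v rfl
        · exact hx0v rfl
      · show v' ∈ (e : Sym2 V); simp [he]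
      · show w0 ∈ (f0 : Sym2 V); simp [hf0]
      · exact hvw0
    have hd2 : (subdiv S).dist (Sum.inr e) (Sum.inr f) = 4 := by
      apply subdiv_dist_four
      · intro z hz hz'
        simp [he, Sym2.mem_iff] at hz
        simp [hf, Sym2.mem_iff] at hz'
        rcases hz with rfl | rfl <;> rcases hz' with rfl | rfl
        · exact hwu rfl
        · exact hxu rfl
        · exact hvw.ne rfl
        · exact hxv rfl
      · show v' ∈ (e : Sym2 V); simp [he]
      · show w ∈ (f : Sym2 V); simp [hf]
      · exact hvw
    obtain ⟨g, hg1, hg2⟩ := hloc.1 (Sum.inr e) (Sum.inr f0) (Sum.inr f) 4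
      (by norm_num) le_rfl hd1 hd2
    have hge : emap hA g e = e := by
      have : Sum.inr (β := S.edgeSet) (emap hA g e) = Sum.inr e := hg1
      injection this
    have hgf : emap hA g f0 = f := by
      have : Sum.inr (β := S.edgeSet) (emap hA g f0) = Sum.inr f := hg2
      injection this
    have hge' : s(g • u', g • v') = s(u', v') := by
      have := congrArg Subtype.val hge
      simpa [emap, he, Sym2.map_pair_eq] using this
    have hgf' : s(g • w0, g • x0) = s(w, x) := by
      have := congrArg Subtype.val hgf
      simpa [emap, hf0, hf, Sym2.map_pair_eq] using this
    have adj1 : S.Adj (g • v') (g • w0) := (hA g v' w0).mpr hvw0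
    have adj2 : S.Adj (g • u') (g • x0) := (hA g u' x0).mpr hx0u.symm
    rw [Sym2.eq_iff] at hge' hgf'
    rcases hge' with ⟨h1, h2⟩ | ⟨h1, h2⟩ <;> rcases hgf' with ⟨h3, h4⟩ | ⟨h3, h4⟩
    · rw [h1, h4] at adj2; exact adj2.symm
    · rw [h2, h3] at adj1
      exact absurd hwx (fun h => tf v' w x hvw h adj1.symm)
    · rw [h2, h3] at adj1
      exact absurd huv (fun h => tf u' v' w h hvw adj1.symm)
    · rw [h2, h3] at adj1; exact adj1.symm
  -- base edge
  obtain ⟨p, hp⟩ := h2arc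
  set u : V := p 0 with hu
  set v : V := p 1 with hv
  have huv : S.Adj u v := hp.1 0 (by norm_num)
  -- coverage
  have hedtop : S.ediam ≠ ⊤ := ediam_ne_top_of_diam_ne_zero (by rw [hdiam]; norm_num)
  have hcover : ∀ z : V, S.Adj v z ∨ S.Adj u z := by
    intro z
    by_cases hz1 : S.Adj v z
    · exact Or.inl hz1
    by_cases hz2 : S.Adj u z
    · exact Or.inr hz2
    by_cases hzu : z = u
    · subst hzu; exact Or.inl huv.symm
    by_cases hzv : z = v
    · subst hzv; exact Or.inr huv
    exfalso
    have hdle : S.dist u z ≤ 2 := hdiam ▸ dist_le_diam hedtop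
    have hreach : S.Reachable u z := hconn u z
    have hd0 : S.dist u z ≠ 0 := fun h => hzu ((hreach.dist_eq_zero_iff.mp h).symm)
    have hd1 : S.dist u z ≠ 1 := fun h => hz2 ((dist_eq_one_iff_adj).mp h)
    have hd2 : S.dist u z = 2 := by omega
    obtain ⟨q, hq⟩ := hreach.exists_walk_length_eq_dist
    rw [hd2] at hq
    cases q with
    | nil => simp at hq
    | @cons _ y _ h1 q' =>
      cases q' with
      | nil => simp at hq
      | @cons _ y' _ h2 q'' =>
        cases q'' with
        | nil =>
          -- u ~ y ~ z
          by_cases hyv : y = v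
          · subst hyv; exact hz1 h2
          · -- apply hC with (v, u, y, z)
            exact hz1 (hC v u y z huv.symm h1 hyv h2 hzv hzu).symm
        | cons _ _ => simp at hq
  have hdisjAB : ∀ z : V, S.Adj v z → S.Adj u z → False := by
    intro z h1 h2
    exact tf u v z huv h1 h2.symm
  -- cross edges
  have hcross : ∀ a b : V, S.Adj v a → S.Adj u b → S.Adj a b := by
    intro a b hva hub
    by_cases hau : a = u
    · subst hau; exact hub
    by_cases hbv : b = v
    · subst hbv; exact hva.symm
    have hab : a ≠ b := fun h => hdisjAB a hva (h ▸ hub)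
    exact (hC a v u b hva.symm huv.symm (fun h => hau h.symm) hub
      (fun h => hab h.symm) hbv).symm
  -- adjacency characterization
  set A : Set V := {z | S.Adj v z} with hAdef
  have hmemA : ∀ z : V, z ∈ A ↔ S.Adj v z := fun z => Iff.rfl
  have hnotA : ∀ z : V, z ∉ A ↔ S.Adj u z := by
    intro z
    constructor
    · intro h; rcases hcover z with h' | h'
      · exact absurd h' h
      · exact h'
    · intro h h'; exact hdisjAB z h' h
  have hadj_iff : ∀ x y : V, S.Adj x y ↔ ((x ∈ A ∧ y ∉ A) ∨ (x ∉ A ∧ y ∈ A)) := by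
    intro x y
    constructor
    · intro hxy
      by_cases hx : x ∈ A
      · left
        refine ⟨hx, fun hy => ?_⟩
        exact tf v x y (hmemA x |>.mp hx) hxy ((hmemA y |>.mp hy)).symm
      · right
        refine ⟨hx, ?_⟩
        by_contra hy
        exact tf u x y ((hnotA x).mp hx) hxy ((hnotA y).mp hy).symm
    · rintro (⟨hx, hy⟩ | ⟨hx, hy⟩)
      · exact hcross x y ((hmemA x).mp hx) ((hnotA y).mp hy)
      · exact (hcross y x ((hmemA y).mp hy) ((hnotA x).mp hx)).symm
  -- cardinalities
  obtain ⟨g0, hg0u, hg0v⟩ := harc u v v u huv huv.symm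
  have hmapBA : ∀ z : V, z ∉ A → g0 • z ∈ A := by
    intro z hz
    have : S.Adj u z := (hnotA z).mp hz
    have : S.Adj (g0 • u) (g0 • z) := (hA g0 u z).mpr this
    rw [hg0u] at this
    exact (hmemA _).mpr this
  have hmapAB : ∀ z : V, z ∈ A → g0⁻¹ • z ∉ A := by
    intro z hz
    have h1 : S.Adj v z := (hmemA z).mp hz
    have h2 : S.Adj (g0⁻¹ • v) (g0⁻¹ • z) := (hA g0⁻¹ v z).mpr h1
    have h3 : g0⁻¹ • v = u := by rw [← hg0u]; simp
    rw [h3] at h2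
    exact (hnotA _).mpr h2
  have hcardBA : Nat.card ↥(Aᶜ) = Nat.card ↥A := by
    apply Nat.card_congr
    exact {
      toFun := fun z => ⟨g0 • z.1, hmapBA z.1 z.2⟩
      invFun := fun z => ⟨g0⁻¹ • z.1, hmapAB z.1 z.2⟩
      left_inv := fun z => by simp
      right_inv := fun z => by simp }
  set n : ℕ := Nat.card ↥A with hn
  have hn2 : 2 ≤ n := by
    obtain ⟨w0, x0, hvw0, _, _, hw0u, _, _, _⟩ := hfc u v huv
    have h1 : (⟨u, (hmemA u).mpr huv.symm⟩ : ↥A) ≠ ⟨w0, (hmemA w0).mpr hvw0⟩ := by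
      intro h
      exact hw0u (congrArg Subtype.val h).symm
    have : Nontrivial ↥A := ⟨_, _, h1⟩
    have := Finite.one_lt_card_iff_nontrivial.mpr this
    omega
  -- build the isomorphism
  have eA : ↥A ≃ Fin n := Finite.equivFinOfCardEq rfl
  have eB : ↥(Aᶜ) ≃ Fin n := Finite.equivFinOfCardEq hcardBA
  let e0 : V ≃ (Fin n ⊕ Fin n) :=
    (Equiv.Set.sumCompl A).symm.trans (Equiv.sumCongr eA eB)
  refine ⟨n, hn2, ⟨⟨e0.symm.symm, ?_⟩⟩⟩
  intro x y
  show (completeBipartiteGraph (Fin n) (Fin n)).Adj (e0 x) (e0 y) ↔ S.Adj x y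
  rw [hadj_iff x y]
  by_cases hx : x ∈ A <;> by_cases hy : y ∈ A
  · have h1 : e0 x = Sum.inl (eA ⟨x, hx⟩) := by
      simp [e0, Equiv.Set.sumCompl_symm_apply_of_mem hx]
    have h2 : e0 y = Sum.inl (eA ⟨y, hy⟩) := by
      simp [e0, Equiv.Set.sumCompl_symm_apply_of_mem hy]
    simp [h1, h2, hx, hy]
  · have h1 : e0 x = Sum.inl (eA ⟨x, hx⟩) := by
      simp [e0, Equiv.Set.sumCompl_symm_apply_of_mem hx]
    have h2 : e0 y = Sum.inr (eB ⟨y, hy⟩) := by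
      simp [e0, Equiv.Set.sumCompl_symm_apply_of_notMem hy]
    simp [h1, h2, hx, hy]
  · have h1 : e0 x = Sum.inr (eB ⟨x, hx⟩) := by
      simp [e0, Equiv.Set.sumCompl_symm_apply_of_notMem hx]
    have h2 : e0 y = Sum.inl (eA ⟨y, hy⟩) := by
      simp [e0, Equiv.Set.sumCompl_symm_apply_of_mem hy]
    simp [h1, h2, hx, hy]
  · have h1 : e0 x = Sum.inr (eB ⟨x, hx⟩) := by
      simp [e0, Equiv.Set.sumCompl_symm_apply_of_notMem hx]
    have h2 : e0 y = Sum.inr (eB ⟨y, hy⟩) := by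
      simp [e0, Equiv.Set.sumCompl_symm_apply_of_notMem hy]
    simp [h1, h2, hx, hy]
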